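/- Let A ∈ ℝ^{n×n} be a symmetric matrix with eigenvalues λ₁ ≤ λ₂ ≤ … ≤ λₙ. If λ₂·I − A is copositive and there exists an eigenvector v¹ ∈ ℝⁿ₊ of A corresponding to the eigenvalue λ₁, then the quadratic function q_A(x) = ⟨Ax, x⟩ is spherically quasi-convex on C = 𝕊^{n-1} ∩ ℝⁿ₊₊. -/

import Mathlib

open scoped InnerProductSpace

/-- The (constant-speed) parametrization on `[0,1]` of the minimal geodesic segment of the
unit sphere joining `x` to a non-antipodal point `y`, namely
`t ↦ (cos(t·d(x,y)) - ⟪x,y⟫ sin(t·d(x,y))/√(1-⟪x,y⟫²)) • x + (sin(t·d(x,y))/√(1-⟪x,y⟫²)) • y`,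
where `d(x,y) = arccos ⟪x,y⟫` is the intrinsic distance on the sphere. -/
noncomputable def geoSeg {n : ℕ} (x y : EuclideanSpace ℝ (Fin n)) (t : ℝ) :
    EuclideanSpace ℝ (Fin n) :=
  (Real.cos (t * Real.arccos ⟪x, y⟫_ℝ) -
      ⟪x, y⟫_ℝ * Real.sin (t * Real.arccos ⟪x, y⟫_ℝ) / Real.sqrt (1 - ⟪x, y⟫_ℝ ^ 2)) • x +
    (Real.sin (t * Real.arccos ⟪x, y⟫_ℝ) / Real.sqrt (1 - ⟪x, y⟫_ℝ ^ 2)) • y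

/-- `γ`, parametrized (with constant speed) on `[0,1]`, is a minimal geodesic segment of the
unit sphere joining `x` to `y`.  For `y ≠ -x` it is the unique such segment `geoSeg x y`
(which is constantly `x` when `y = x`); for `y = -x` it is
`t ↦ cos(tπ) • x + sin(tπ) • v` for some unit vector `v` orthogonal to `x`. -/
def IsMinGeodesic {n : ℕ} (γ : ℝ → EuclideanSpace ℝ (Fin n))
    (x y : EuclideanSpace ℝ (Fin n)) : Prop :=
  ‖x‖ = 1 ∧ ‖y‖ = 1 ∧
    ((y ≠ -x ∧ γ = geoSeg x y) ∨
      (y = -x ∧ ∃ v : EuclideanSpace ℝ (Fin n), ‖v‖ = 1 ∧ ⟪x, v⟫_ℝ = 0 ∧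
        γ = fun t => Real.cos (t * Real.pi) • x + Real.sin (t * Real.pi) • v))

/-- A subset of the unit sphere is spherically convex if it contains every minimal geodesic
segment joining any two of its points. -/
def SphericallyConvex {n : ℕ} (C : Set (EuclideanSpace ℝ (Fin n))) : Prop :=
  ∀ x ∈ C, ∀ y ∈ C, ∀ γ : ℝ → EuclideanSpace ℝ (Fin n),
    IsMinGeodesic γ x y → ∀ t ∈ Set.Icc (0 : ℝ) 1, γ t ∈ C

/-- `f` is spherically quasi-convex on `C`: along every minimal geodesic segment lying in `C`,
the composition with `f` is quasi-convex, i.e. `f(γ t) ≤ max (f(γ t₁)) (f(γ t₂))` for all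
`t ∈ [t₁, t₂]`. -/
def SphQuasiConvexOn {n : ℕ} (C : Set (EuclideanSpace ℝ (Fin n)))
    (f : EuclideanSpace ℝ (Fin n) → ℝ) : Prop :=
  ∀ x ∈ C, ∀ y ∈ C, ∀ γ : ℝ → EuclideanSpace ℝ (Fin n),
    IsMinGeodesic γ x y → (∀ t ∈ Set.Icc (0 : ℝ) 1, γ t ∈ C) →
    ∀ t₁ t t₂ : ℝ, 0 ≤ t₁ → t₁ ≤ t → t ≤ t₂ → t₂ ≤ 1 →
      f (γ t) ≤ max (f (γ t₁)) (f (γ t₂))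

/-- Multiplication of an `n × n` real matrix with a vector of `EuclideanSpace ℝ (Fin n)`. -/
noncomputable def mulVecE {n : ℕ} (A : Matrix (Fin n) (Fin n) ℝ)
    (x : EuclideanSpace ℝ (Fin n)) : EuclideanSpace ℝ (Fin n) :=
  WithLp.toLp 2 (fun i => ∑ j, A i j * x j)

section Aux

variable {n : ℕ} (A : Matrix (Fin n) (Fin n) ℝ)

lemma cqsq_inner_euc (x y : EuclideanSpace ℝ (Fin n)) : ⟪x, y⟫_ℝ = ∑ i, x i * y i := by
  simp [PiLp.inner_apply, RCLike.inner_apply, mul_comm]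

lemma cqsq_mulVecE_comb (a b : ℝ) (p r : EuclideanSpace ℝ (Fin n)) :
    mulVecE A (a • p + b • r) = a • mulVecE A p + b • mulVecE A r := by
  ext i
  simp only [mulVecE, PiLp.add_apply, PiLp.smul_apply, smul_eq_mul, Finset.mul_sum]
  rw [← Finset.sum_add_distrib]
  congr 1; ext j; ring

lemma cqsq_mulVecE_symm (hA : A.IsSymm) (p r : EuclideanSpace ℝ (Fin n)) :
    ⟪mulVecE A p, r⟫_ℝ = ⟪p, mulVecE A r⟫_ℝ := by
  simp only [cqsq_inner_euc, mulVecE, Finset.sum_mul, Finset.mul_sum]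
  rw [Finset.sum_comm]
  congr 1; ext i; congr 1; ext j
  rw [← hA.apply i j]; ring

lemma cqsq_qexp (hA : A.IsSymm) (a b : ℝ) (p r : EuclideanSpace ℝ (Fin n)) :
    ⟪mulVecE A (a • p + b • r), a • p + b • r⟫_ℝ =
      a ^ 2 * ⟪mulVecE A p, p⟫_ℝ + 2 * a * b * ⟪mulVecE A p, r⟫_ℝ
        + b ^ 2 * ⟪mulVecE A r, r⟫_ℝ := by
  rw [cqsq_mulVecE_comb]
  rw [inner_add_left, inner_add_right, inner_add_right, real_inner_smul_left,
    real_inner_smul_left, real_inner_smul_left, real_inner_smul_left,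
    real_inner_smul_right, real_inner_smul_right, real_inner_smul_right,
    real_inner_smul_right]
  have h2 : ⟪mulVecE A r, p⟫_ℝ = ⟪mulVecE A p, r⟫_ℝ := by
    rw [cqsq_mulVecE_symm A hA r p, real_inner_comm]
  rw [h2]; ring

lemma cqsq_inner_comb (a b : ℝ) (p r : EuclideanSpace ℝ (Fin n)) :
    ⟪a • p + b • r, a • p + b • r⟫_ℝ =
      a ^ 2 * ⟪p, p⟫_ℝ + 2 * a * b * ⟪p, r⟫_ℝ + b ^ 2 * ⟪r, r⟫_ℝ := by
  rw [inner_add_left, inner_add_right, inner_add_right, real_inner_smul_left,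
    real_inner_smul_left, real_inner_smul_left, real_inner_smul_left,
    real_inner_smul_right, real_inner_smul_right, real_inner_smul_right,
    real_inner_smul_right, real_inner_comm r p]
  ring

lemma cqsq_spectral (hpos : 0 < n) (hA : A.IsSymm) (v : Fin n → EuclideanSpace ℝ (Fin n))
    (hv : Orthonormal ℝ v) (μ : Fin n → ℝ)
    (heig : ∀ i, mulVecE A (v i) = μ i • v i) (p : EuclideanSpace ℝ (Fin n)) :
    ⟪mulVecE A p, p⟫_ℝ = ∑ i, μ i * ⟪v i, p⟫_ℝ ^ 2 ∧
      ⟪p, p⟫_ℝ = ∑ i, ⟪v i, p⟫_ℝ ^ 2 := by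
  haveI : Nonempty (Fin n) := Fin.pos_iff_nonempty.mp hpos
  have hcard : Fintype.card (Fin n) = Module.finrank ℝ (EuclideanSpace ℝ (Fin n)) := by
    simp
  let b : Module.Basis (Fin n) ℝ (EuclideanSpace ℝ (Fin n)) :=
    basisOfOrthonormalOfCardEqFinrank hv hcard
  have hb : ⇑b = v := coe_basisOfOrthonormalOfCardEqFinrank hv hcard
  have hvb : Orthonormal ℝ ⇑b := by rw [hb]; exact hv
  let ob : OrthonormalBasis (Fin n) ℝ (EuclideanSpace ℝ (Fin n)) :=
    b.toOrthonormalBasis hvb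
  have hob : ⇑ob = v := by
    rw [← hb]; ext i; simp [ob, Module.Basis.coe_toOrthonormalBasis]
  have key : ∀ x : EuclideanSpace ℝ (Fin n),
      ⟪x, p⟫_ℝ = ∑ i, ⟪x, v i⟫_ℝ * ⟪v i, p⟫_ℝ := by
    intro x
    have := ob.sum_inner_mul_inner x p
    simp only [hob] at this
    exact this.symm
  constructor
  · rw [key]
    congr 1; ext i
    have : ⟪mulVecE A p, v i⟫_ℝ = μ i * ⟪v i, p⟫_ℝ := by
      rw [cqsq_mulVecE_symm A hA, heig i, real_inner_smul_right, real_inner_comm]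
    rw [this]; ring
  · rw [key]
    congr 1; ext i
    rw [real_inner_comm p (v i)]; ring

lemma cqsq_hasDerivAt_quadform (a b c s : ℝ) :
    HasDerivAt (fun s => a * Real.cos s ^ 2 + 2 * b * (Real.cos s * Real.sin s)
        + c * Real.sin s ^ 2)
      (2 * (c - a) * (Real.sin s * Real.cos s)
        + 2 * b * (Real.cos s ^ 2 - Real.sin s ^ 2)) s := by
  have hc := Real.hasDerivAt_cos s
  have hs := Real.hasDerivAt_sin s
  have h1 := (hc.pow 2).const_mul a
  have h2 := ((hc.mul hs).const_mul (2 * b))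
  have h3 := (hs.pow 2).const_mul c
  have H := (h1.add h2).add h3
  exact H.congr_deriv (by norm_num; ring)

lemma cqsq_exists_cos_sin (α β : ℝ) (h : α ^ 2 + β ^ 2 = 1) :
    ∃ s : ℝ, Real.cos s = α ∧ Real.sin s = β := by
  have hα : -1 ≤ α ∧ α ≤ 1 := by constructor <;> nlinarith [sq_nonneg β]
  have hsin : Real.sin (Real.arccos α) = Real.sqrt (1 - α ^ 2) := by
    rw [Real.sin_arccos]
  have hb : Real.sqrt (1 - α ^ 2) = |β| := by
    rw [show (1 : ℝ) - α ^ 2 = β ^ 2 by linarith, Real.sqrt_sq_eq_abs]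
  rcases le_or_gt 0 β with hβ | hβ
  · exact ⟨Real.arccos α, Real.cos_arccos hα.1 hα.2, by rw [hsin, hb, abs_of_nonneg hβ]⟩
  · refine ⟨-Real.arccos α, ?_, ?_⟩
    · rw [Real.cos_neg]; exact Real.cos_arccos hα.1 hα.2
    · rw [Real.sin_neg, hsin, hb, abs_of_neg hβ, neg_neg]

lemma cqsq_mulVecE_shift (m : ℝ) (p : EuclideanSpace ℝ (Fin n)) :
    mulVecE (m • (1 : Matrix (Fin n) (Fin n) ℝ) - A) p = m • p - mulVecE A p := by
  ext i
  simp only [mulVecE, PiLp.sub_apply, PiLp.smul_apply, smul_eq_mul,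
    Matrix.sub_apply, Matrix.smul_apply, Matrix.one_apply, smul_eq_mul]
  rw [show (∑ j, (m * (if i = j then (1:ℝ) else 0) - A i j) * p j)
      = ∑ j, ((if i = j then m * p j else 0) - A i j * p j) by
    congr 1; ext j; by_cases h : i = j <;> simp [h] <;> ring]
  rw [Finset.sum_sub_distrib, Finset.sum_ite_eq]
  simp

end Aux

set_option maxHeartbeats 1000000 in
/-- Let `A` be a symmetric `n × n` matrix (`n ≥ 2`) with an orthonormal basis of eigenvectors
and corresponding eigenvalues `μ₀ ≤ μ₁ ≤ … ≤ μₙ₋₁`.  If `μ₁·I - A` is copositive and there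
exists a nonzero eigenvector `w ∈ ℝⁿ₊` of `A` corresponding to the smallest eigenvalue `μ₀`,
then the quadratic function `q_A(x) = ⟪Ax, x⟫` is spherically quasi-convex on
`C = 𝕊^{n-1} ∩ ℝⁿ₊₊`. -/
theorem copositive_implies_quadratic_sph_quasiconvex {n : ℕ} (hn : 2 ≤ n)
    (A : Matrix (Fin n) (Fin n) ℝ) (hA : A.IsSymm)
    (v : Fin n → EuclideanSpace ℝ (Fin n)) (hv : Orthonormal ℝ v)
    (μ : Fin n → ℝ) (heig : ∀ i, mulVecE A (v i) = μ i • v i) (hmono : Monotone μ)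
    (hcop : ∀ x : EuclideanSpace ℝ (Fin n), (∀ i, 0 ≤ x i) →
      0 ≤ ⟪mulVecE (μ ⟨1, by omega⟩ • (1 : Matrix (Fin n) (Fin n) ℝ) - A) x, x⟫_ℝ)
    (hev : ∃ w : EuclideanSpace ℝ (Fin n), w ≠ 0 ∧ (∀ i, 0 ≤ w i) ∧
      mulVecE A w = μ ⟨0, by omega⟩ • w) :
    SphQuasiConvexOn (Metric.sphere 0 1 ∩ {x | ∀ i, 0 < x i})
      (fun x => ⟪mulVecE A x, x⟫_ℝ) := by
  have i0 : Fin n := ⟨0, by omega⟩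
  intro x hx y hy γ hγ hγC t₁ t t₂ ht10 ht1t htt2 ht21
  by_contra hcon
  push_neg at hcon
  simp only [sup_lt_iff] at hcon
  obtain ⟨hcon1, hcon2⟩ := hcon
  obtain ⟨hx1, hy1, hcase⟩ := hγ
  have hxpos : ∀ i, 0 < x i := hx.2
  have hypos : ∀ i, 0 < y i := hy.2
  -- y ≠ -x
  rcases hcase with ⟨-, hγeq⟩ | ⟨hyx, -⟩
  swap
  · have h1 := hypos ⟨0, by omega⟩
    have h2 := hxpos ⟨0, by omega⟩
    rw [hyx] at h1
    simp only [PiLp.neg_apply] at h1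
    linarith
  subst hγeq
  -- the inner product of the endpoints
  set c : ℝ := ⟪x, y⟫_ℝ with hc_def
  haveI : Nonempty (Fin n) := ⟨⟨0, by omega⟩⟩
  have hc0 : 0 < c := by
    rw [hc_def, cqsq_inner_euc]
    exact Finset.sum_pos (fun i _ => mul_pos (hxpos i) (hypos i)) Finset.univ_nonempty
  have hc1 : c ≤ 1 := by
    have := real_inner_le_norm x y
    rw [hx1, hy1] at this; simpa using this
  have hxx : ⟪x, x⟫_ℝ = 1 := by
    rw [real_inner_self_eq_norm_mul_norm, hx1]; ring
  have hyy : ⟪y, y⟫_ℝ = 1 := by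
    rw [real_inner_self_eq_norm_mul_norm, hy1]; ring
  rcases eq_or_lt_of_le hc1 with hceq | hclt
  · -- c = 1 : the geodesic is constant
    have hconst : ∀ t' : ℝ, geoSeg x y t' = x := by
      intro t'
      rw [geoSeg, ← hc_def, hceq]
      simp [Real.arccos_one]
    rw [hconst t, hconst t₁] at *
    linarith
    -- main case : 0 < c < 1
  set θ : ℝ := Real.arccos c with hθ_def
  have hθpos : 0 < θ := Real.arccos_pos.mpr hclt
  set s : ℝ := Real.sqrt (1 - c ^ 2) with hs_def
  have h1c2 : 0 < 1 - c ^ 2 := by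
    have h := mul_pos (sub_pos.mpr hclt) (show (0:ℝ) < 1 + c by linarith)
    have h' : (1 - c) * (1 + c) = 1 - c ^ 2 := by ring
    linarith
  have hspos : 0 < s := Real.sqrt_pos.mpr h1c2
  have hs2 : s ^ 2 = 1 - c ^ 2 := Real.sq_sqrt (le_of_lt h1c2)
  set u : EuclideanSpace ℝ (Fin n) := s⁻¹ • (y - c • x) with hu_def
  have hxu : ⟪x, u⟫_ℝ = 0 := by
    rw [hu_def, real_inner_smul_right, inner_sub_right, real_inner_smul_right, hxx,
      ← hc_def]
    ring
  have hcyx : ⟪y, x⟫_ℝ = c := by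
    rw [real_inner_comm]
  have hyx2 : ⟪y - c • x, y - c • x⟫_ℝ = 1 - c ^ 2 := by
    rw [inner_sub_left, inner_sub_right, inner_sub_right, real_inner_smul_left,
      real_inner_smul_left, real_inner_smul_right, real_inner_smul_right, hxx, hyy]
    linear_combination (-c) * hcyx
  have huu : ⟪u, u⟫_ℝ = 1 := by
    rw [hu_def, real_inner_smul_left, real_inner_smul_right, hyx2]
    field_simp
    linarith [hs2]
  have hgeo : ∀ t' : ℝ, geoSeg x y t' =
      Real.cos (t' * θ) • x + Real.sin (t' * θ) • u := by
    intro t'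
    rw [geoSeg, ← hc_def, ← hθ_def, ← hs_def, hu_def]
    module
  set qa : ℝ := ⟪mulVecE A x, x⟫_ℝ with hqa_def
  set qb : ℝ := ⟪mulVecE A x, u⟫_ℝ with hqb_def
  set qc : ℝ := ⟪mulVecE A u, u⟫_ℝ with hqc_def
  set F : ℝ → ℝ := fun σ => qa * Real.cos σ ^ 2 + 2 * qb * (Real.cos σ * Real.sin σ)
      + qc * Real.sin σ ^ 2 with hF_def
  have hqab : ∀ α β : ℝ, ⟪mulVecE A (α • x + β • u), α • x + β • u⟫_ℝ
      = α ^ 2 * qa + 2 * α * β * qb + β ^ 2 * qc := by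
    intro α β
    rw [cqsq_qexp A hA]
  have hFgeo : ∀ t' : ℝ, ⟪mulVecE A (geoSeg x y t'), geoSeg x y t'⟫_ℝ = F (t' * θ) := by
    intro t'
    rw [hgeo t', hqab, hF_def]
    ring
  rw [hFgeo, hFgeo] at hcon1
  rw [hFgeo, hFgeo] at hcon2
  have hFcont : Continuous F := by
    rw [hF_def]; fun_prop
  have ht12 : t₁ < t₂ := by
    rcases eq_or_lt_of_le (le_trans ht1t htt2) with h | h
    · exfalso
      have : t = t₁ := le_antisymm (by rw [h]; exact htt2) ht1t
      rw [this] at hcon1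
      exact lt_irrefl _ hcon1
    · exact h
  obtain ⟨ts, htsmem, htsmax⟩ := isCompact_Icc.exists_isMaxOn
    (⟨t, ht1t, htt2⟩ : (Set.Icc t₁ t₂).Nonempty)
    ((hFcont.comp (continuous_id.mul continuous_const)).continuousOn :
      ContinuousOn (fun r : ℝ => F (r * θ)) (Set.Icc t₁ t₂))
  have hmax : ∀ r ∈ Set.Icc t₁ t₂, F (r * θ) ≤ F (ts * θ) := fun r hr => htsmax hr
  have hFt_le : F (t * θ) ≤ F (ts * θ) := hmax t ⟨ht1t, htt2⟩
  have hts1 : t₁ < ts := by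
    rcases eq_or_lt_of_le htsmem.1 with h | h
    · exfalso
      rw [← h] at hFt_le
      linarith
    · exact h
  have hts2 : ts < t₂ := by
    rcases eq_or_lt_of_le htsmem.2 with h | h
    · exfalso
      rw [h] at hFt_le
      linarith
    · exact h
  -- local max, derivative vanishes
  have hloc : IsLocalMax F (ts * θ) := by
    have hmem : Set.Ioo (t₁ * θ) (t₂ * θ) ∈ nhds (ts * θ) :=
      Ioo_mem_nhds (mul_lt_mul_of_pos_right hts1 hθpos) (mul_lt_mul_of_pos_right hts2 hθpos)
    filter_upwards [hmem] with σ hσ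
    have hθne : θ ≠ 0 := ne_of_gt hθpos
    have h1 : t₁ ≤ σ / θ := by rw [le_div_iff₀ hθpos]; exact le_of_lt hσ.1
    have h2 : σ / θ ≤ t₂ := by rw [div_le_iff₀ hθpos]; exact le_of_lt hσ.2
    have := hmax (σ / θ) ⟨h1, h2⟩
    rwa [div_mul_cancel₀ σ hθne] at this
  have hderiv0 : 2 * (qc - qa) * (Real.sin (ts * θ) * Real.cos (ts * θ))
      + 2 * qb * (Real.cos (ts * θ) ^ 2 - Real.sin (ts * θ) ^ 2) = 0 := by
    have hd := (cqsq_hasDerivAt_quadform qa qb qc (ts * θ)).deriv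
    have h0 := hloc.deriv_eq_zero
    rw [hF_def] at h0
    rw [h0] at hd
    linarith [hd]
  set CC : ℝ := Real.cos (ts * θ) with hCC_def
  set SS : ℝ := Real.sin (ts * θ) with hSS_def
  have hPyth : SS ^ 2 + CC ^ 2 = 1 := Real.sin_sq_add_cos_sq _
  set K : ℝ := (qa - qc) / 2 * (CC ^ 2 - SS ^ 2) + qb * (2 * SS * CC) with hK_def
  have hQcK : (qa - qc) / 2 = K * (CC ^ 2 - SS ^ 2) := by
    rw [hK_def]
    linear_combination (-(SS * CC)) * hderiv0 + (-((qa - qc) / 2 * (1 + SS ^ 2 + CC ^ 2))) * hPyth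
  have hRK : qb = K * (2 * SS * CC) := by
    rw [hK_def]
    linear_combination ((CC ^ 2 - SS ^ 2) / 2) * hderiv0 + (-(qb * (1 + SS ^ 2 + CC ^ 2))) * hPyth
  have hUV : (CC ^ 2 - SS ^ 2) ^ 2 + (2 * SS * CC) ^ 2 = 1 := by
    linear_combination (SS ^ 2 + CC ^ 2 + 1) * hPyth
  have hglobal : ∀ α β : ℝ, α ^ 2 + β ^ 2 = 1 →
      α ^ 2 * qa + 2 * α * β * qb + β ^ 2 * qc =
        (qa + qc) / 2 + K * ((α ^ 2 - β ^ 2) * (CC ^ 2 - SS ^ 2)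
          + (2 * α * β) * (2 * SS * CC)) := by
    intro α β hαβ
    linear_combination ((qa + qc) / 2) * hαβ + (α ^ 2 - β ^ 2) * hQcK + (2 * α * β) * hRK
  have hDle : ∀ α β : ℝ, α ^ 2 + β ^ 2 = 1 →
      (α ^ 2 - β ^ 2) * (CC ^ 2 - SS ^ 2) + (2 * α * β) * (2 * SS * CC) ≤ 1 := by
    intro α β hαβ
    have hXY : (α ^ 2 - β ^ 2) ^ 2 + (2 * α * β) ^ 2 = 1 := by
      linear_combination (α ^ 2 + β ^ 2 + 1) * hαβ
    set d : ℝ := (α ^ 2 - β ^ 2) * (CC ^ 2 - SS ^ 2) + (2 * α * β) * (2 * SS * CC) with hd_def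
    set e : ℝ := (α ^ 2 - β ^ 2) * (2 * SS * CC) - (2 * α * β) * (CC ^ 2 - SS ^ 2) with he_def
    have hid : d ^ 2 + e ^ 2 = 1 := by
      rw [hd_def, he_def]
      linear_combination ((CC ^ 2 - SS ^ 2) ^ 2 + (2 * SS * CC) ^ 2) * hXY + hUV
    linarith [hid, sq_nonneg e, sq_nonneg (d - 1)]
  have hPyth' : CC ^ 2 + SS ^ 2 = 1 := by linarith
  have hFts : F (ts * θ) = (qa + qc) / 2 + K := by
    have h := hglobal CC SS hPyth'
    have hF' : F (ts * θ) = CC ^ 2 * qa + 2 * CC * SS * qb + SS ^ 2 * qc := by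
      rw [hF_def]; ring
    rw [hF', h]
    linear_combination K * hUV
  rcases lt_or_ge K 0 with hK | hK
  · -- K < 0 : the endpoint t₁ would beat the interior max, contradiction
    have hP1 : Real.sin (t₁ * θ) ^ 2 + Real.cos (t₁ * θ) ^ 2 = 1 := Real.sin_sq_add_cos_sq _
    have h1 := hglobal (Real.cos (t₁ * θ)) (Real.sin (t₁ * θ)) (by linarith)
    have hD1 := hDle (Real.cos (t₁ * θ)) (Real.sin (t₁ * θ)) (by linarith)
    have hF1 : F (t₁ * θ) = (qa + qc) / 2
        + K * ((Real.cos (t₁ * θ) ^ 2 - Real.sin (t₁ * θ) ^ 2) * (CC ^ 2 - SS ^ 2)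
          + (2 * Real.cos (t₁ * θ) * Real.sin (t₁ * θ)) * (2 * SS * CC)) := by
      rw [hF_def]
      linear_combination h1
    have hKD : K * 1 ≤ K * ((Real.cos (t₁ * θ) ^ 2 - Real.sin (t₁ * θ) ^ 2) * (CC ^ 2 - SS ^ 2)
          + (2 * Real.cos (t₁ * θ) * Real.sin (t₁ * θ)) * (2 * SS * CC)) :=
      mul_le_mul_of_nonpos_left hD1 (le_of_lt hK)
    have h5 : (qa + qc) / 2 + K * 1 ≤ F (t₁ * θ) := by
      rw [hF1]
      exact add_le_add_right hKD _
    rw [mul_one] at h5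
    rw [hFts] at hFt_le
    exact absurd hcon1 (not_lt.mpr (le_trans hFt_le h5))
  · -- K ≥ 0 : the interior max point is a global max of q on the circle
    have hn1 : 1 < n := by omega
    have hn0 : 0 < n := by omega
    set z : EuclideanSpace ℝ (Fin n) := geoSeg x y ts with hz_def
    have hzC : z ∈ Metric.sphere (0 : EuclideanSpace ℝ (Fin n)) 1 ∩ {x | ∀ i, 0 < x i} :=
      hγC ts ⟨by linarith, by linarith⟩
    have hzpos : ∀ i, 0 < z i := hzC.2
    have hznn : ∀ i, 0 ≤ z i := fun i => le_of_lt (hzpos i)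
    have hznorm : ‖z‖ = 1 := by
      have h := hzC.1
      rwa [mem_sphere_zero_iff_norm] at h
    have hzz : ⟪z, z⟫_ℝ = 1 := by
      rw [real_inner_self_eq_norm_mul_norm, hznorm]; ring
    have hqz : ⟪mulVecE A z, z⟫_ℝ = F (ts * θ) := hFgeo ts
    -- copositivity : q z ≤ μ₁
    have hcz0 := hcop z hznn
    rw [cqsq_mulVecE_shift, inner_sub_left, real_inner_smul_left, hzz] at hcz0
    have hqz_le : ⟪mulVecE A z, z⟫_ℝ ≤ μ ⟨1, hn1⟩ := by
      have h : (0 : ℝ) ≤ μ ⟨1, hn1⟩ * 1 - ⟪mulVecE A z, z⟫_ℝ := hcz0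
      linarith
    -- a unit vector of the 2-plane orthogonal to v₀
    set cx : ℝ := ⟪v ⟨0, hn0⟩, x⟫_ℝ with hcx_def
    set cu : ℝ := ⟪v ⟨0, hn0⟩, u⟫_ℝ with hcu_def
    obtain ⟨α, β, hαβ, hperp⟩ : ∃ α β : ℝ, α ^ 2 + β ^ 2 = 1 ∧ α * cx + β * cu = 0 := by
      rcases eq_or_ne (cx ^ 2 + cu ^ 2) 0 with h | h
      · refine ⟨1, 0, by norm_num, ?_⟩
        have hcx0 : cx = 0 := by
          have hcx2 : cx ^ 2 = 0 := by linarith [sq_nonneg cx, sq_nonneg cu]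
          exact pow_eq_zero_iff (by norm_num) |>.mp hcx2
        rw [hcx0]; ring
      · have hpos2 : 0 < cx ^ 2 + cu ^ 2 := lt_of_le_of_ne (by positivity) (Ne.symm h)
        have hr : 0 < Real.sqrt (cx ^ 2 + cu ^ 2) := Real.sqrt_pos.mpr hpos2
        have hr2 : Real.sqrt (cx ^ 2 + cu ^ 2) ^ 2 = cx ^ 2 + cu ^ 2 :=
          Real.sq_sqrt (le_of_lt hpos2)
        refine ⟨-cu / Real.sqrt (cx ^ 2 + cu ^ 2), cx / Real.sqrt (cx ^ 2 + cu ^ 2), ?_, ?_⟩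
        · field_simp
          linarith [hr2]
        · field_simp
          ring
    set p : EuclideanSpace ℝ (Fin n) := α • x + β • u with hp_def
    have hperp' : ⟪v ⟨0, hn0⟩, p⟫_ℝ = 0 := by
      rw [hp_def, inner_add_right, real_inner_smul_right, real_inner_smul_right,
        ← hcx_def, ← hcu_def]
      linear_combination hperp
    have hpp : ⟪p, p⟫_ℝ = 1 := by
      rw [hp_def, cqsq_inner_comb, hxx, hxu, huu]
      linear_combination hαβ
    obtain ⟨hs1p, hs2p⟩ := cqsq_spectral A hn0 hA v hv μ heig p
    have hqp_ge : μ ⟨1, hn1⟩ ≤ ⟪mulVecE A p, p⟫_ℝ := by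
      have hsum : ∑ i, μ ⟨1, hn1⟩ * ⟪v i, p⟫_ℝ ^ 2 ≤ ∑ i, μ i * ⟪v i, p⟫_ℝ ^ 2 := by
        apply Finset.sum_le_sum
        intro i _
        rcases eq_or_ne (i : ℕ) 0 with h0 | h0
        · have hieq : i = ⟨0, hn0⟩ := Fin.ext h0
          rw [hieq, hperp']
          norm_num
        · refine mul_le_mul_of_nonneg_right (hmono ?_) (sq_nonneg _)
          rw [Fin.le_def]
          simpa using Nat.one_le_iff_ne_zero.mpr h0
      calc μ ⟨1, hn1⟩ = μ ⟨1, hn1⟩ * ⟪p, p⟫_ℝ := by rw [hpp]; ring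
        _ = ∑ i, μ ⟨1, hn1⟩ * ⟪v i, p⟫_ℝ ^ 2 := by rw [hs2p, Finset.mul_sum]
        _ ≤ ∑ i, μ i * ⟪v i, p⟫_ℝ ^ 2 := hsum
        _ = ⟪mulVecE A p, p⟫_ℝ := hs1p.symm
    -- p is dominated by the interior max
    have hqp_eq : ⟪mulVecE A p, p⟫_ℝ = α ^ 2 * qa + 2 * α * β * qb + β ^ 2 * qc := hqab α β
    have hD' := hDle α β hαβ
    have hg := hglobal α β hαβ
    have hqp_le : ⟪mulVecE A p, p⟫_ℝ ≤ F (ts * θ) := by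
      rw [hqp_eq, hg, hFts]
      have hKD : K * ((α ^ 2 - β ^ 2) * (CC ^ 2 - SS ^ 2) + 2 * α * β * (2 * SS * CC))
          ≤ K * 1 := mul_le_mul_of_nonneg_left hD' hK
      calc (qa + qc) / 2 + K * ((α ^ 2 - β ^ 2) * (CC ^ 2 - SS ^ 2)
              + 2 * α * β * (2 * SS * CC))
          ≤ (qa + qc) / 2 + K * 1 := add_le_add_right hKD _
        _ = (qa + qc) / 2 + K := by rw [mul_one]
    have hqz_eq : ⟪mulVecE A z, z⟫_ℝ = μ ⟨1, hn1⟩ := by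
      refine le_antisymm hqz_le ?_
      rw [hqz]
      linarith [hqp_ge, hqp_le]
    -- μ₀ < μ₁
    have hγt1C : geoSeg x y t₁ ∈ Metric.sphere (0 : EuclideanSpace ℝ (Fin n)) 1
        ∩ {x | ∀ i, 0 < x i} := hγC t₁ ⟨ht10, by linarith⟩
    have hγt1z : ⟪geoSeg x y t₁, geoSeg x y t₁⟫_ℝ = 1 := by
      have h := hγt1C.1
      rw [mem_sphere_zero_iff_norm] at h
      rw [real_inner_self_eq_norm_mul_norm, h]; ring
    obtain ⟨ht1s, ht1n⟩ := cqsq_spectral A hn0 hA v hv μ heig (geoSeg x y t₁)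
    have hmu0_le : μ ⟨0, hn0⟩ ≤ ⟪mulVecE A (geoSeg x y t₁), geoSeg x y t₁⟫_ℝ := by
      calc μ ⟨0, hn0⟩ = μ ⟨0, hn0⟩ * ⟪geoSeg x y t₁, geoSeg x y t₁⟫_ℝ := by
            rw [hγt1z]; ring
        _ = ∑ i, μ ⟨0, hn0⟩ * ⟪v i, geoSeg x y t₁⟫_ℝ ^ 2 := by rw [ht1n, Finset.mul_sum]
        _ ≤ ∑ i, μ i * ⟪v i, geoSeg x y t₁⟫_ℝ ^ 2 := by
            apply Finset.sum_le_sum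
            intro i _
            refine mul_le_mul_of_nonneg_right (hmono ?_) (sq_nonneg _)
            rw [Fin.le_def]
            simp
        _ = ⟪mulVecE A (geoSeg x y t₁), geoSeg x y t₁⟫_ℝ := ht1s.symm
    have hμ01 : μ ⟨0, hn0⟩ < μ ⟨1, hn1⟩ := by
      rw [hFgeo t₁] at hmu0_le
      have hF_eq : F (ts * θ) = μ ⟨1, hn1⟩ := by rw [← hqz]; exact hqz_eq
      linarith [hcon1, hFt_le]
    -- final contradiction using the nonnegative eigenvector w
    obtain ⟨w, hw0, hwnn, hwe0⟩ := hev
    have hwe : mulVecE A w = μ ⟨0, hn0⟩ • w := hwe0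
    have hzw : 0 < ⟪z, w⟫_ℝ := by
      rw [cqsq_inner_euc]
      obtain ⟨j, hj⟩ : ∃ j, w j ≠ 0 := by
        by_contra hc
        push_neg at hc
        exact hw0 (by ext i; exact hc i)
      exact Finset.sum_pos' (fun i _ => mul_nonneg (hznn i) (hwnn i))
        ⟨j, Finset.mem_univ j, mul_pos (hzpos j) (lt_of_le_of_ne (hwnn j) (Ne.symm hj))⟩
    have hww : 0 < ⟪w, w⟫_ℝ := by
      rw [real_inner_self_eq_norm_mul_norm]
      have hwpos : 0 < ‖w‖ := norm_pos_iff.mpr hw0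
      exact mul_pos hwpos hwpos
    have hAzw : ⟪mulVecE A z, w⟫_ℝ = μ ⟨0, hn0⟩ * ⟪z, w⟫_ℝ := by
      rw [cqsq_mulVecE_symm A hA, hwe, real_inner_smul_right]
    have hAww : ⟪mulVecE A w, w⟫_ℝ = μ ⟨0, hn0⟩ * ⟪w, w⟫_ℝ := by
      rw [hwe, real_inner_smul_left]
    set m : ℝ := Finset.univ.inf' Finset.univ_nonempty (fun i => z i) with hm_def
    have hmle : ∀ i, m ≤ z i := fun i => Finset.inf'_le _ (Finset.mem_univ i)
    have hmpos : 0 < m := by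
      rw [hm_def, Finset.lt_inf'_iff]
      exact fun i _ => hzpos i
    set M : ℝ := Finset.univ.sup' Finset.univ_nonempty (fun i => w i) with hM_def
    have hMge : ∀ i, w i ≤ M := fun i => Finset.le_sup' _ (Finset.mem_univ i)
    have hMnn : 0 ≤ M := le_trans (hwnn ⟨0, hn0⟩) (hMge _)
    set ε : ℝ := min (m / (M + 1)) (⟪z, w⟫_ℝ / ⟪w, w⟫_ℝ) with hε_def
    have hεpos : 0 < ε := lt_min (by positivity) (by positivity)
    have hε1 : ε ≤ m / (M + 1) := min_le_left _ _
    have hε2 : ε ≤ ⟪z, w⟫_ℝ / ⟪w, w⟫_ℝ := min_le_right _ _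
    set pε : EuclideanSpace ℝ (Fin n) := (1 : ℝ) • z + (-ε) • w with hpε_def
    have hpεnn : ∀ i, 0 ≤ pε i := by
      intro i
      rw [hpε_def]
      simp only [PiLp.add_apply, PiLp.smul_apply, smul_eq_mul, one_mul, neg_mul]
      have h1 : ε * w i ≤ (m / (M + 1)) * M :=
        mul_le_mul hε1 (hMge i) (hwnn i) (by positivity)
      have h2 : (m / (M + 1)) * M ≤ m := by
        rw [div_mul_eq_mul_div, div_le_iff₀ (by linarith : (0:ℝ) < M + 1)]
        have h3 := mul_le_mul_of_nonneg_left (show M ≤ M + 1 by linarith) (le_of_lt hmpos)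
        linarith
      linarith [hmle i]
    have hfin0 := hcop pε hpεnn
    rw [cqsq_mulVecE_shift, inner_sub_left, real_inner_smul_left] at hfin0
    have hqpε : ⟪mulVecE A pε, pε⟫_ℝ = 1 ^ 2 * ⟪mulVecE A z, z⟫_ℝ
        + 2 * 1 * (-ε) * ⟪mulVecE A z, w⟫_ℝ + (-ε) ^ 2 * ⟪mulVecE A w, w⟫_ℝ :=
      cqsq_qexp A hA 1 (-ε) z w
    rw [hqz_eq, hAzw, hAww] at hqpε
    have hppε : ⟪pε, pε⟫_ℝ = 1 ^ 2 * ⟪z, z⟫_ℝ + 2 * 1 * (-ε) * ⟪z, w⟫_ℝ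
        + (-ε) ^ 2 * ⟪w, w⟫_ℝ := cqsq_inner_comb 1 (-ε) z w
    rw [hzz] at hppε
    rw [hqpε, hppε] at hfin0
    have hfin : (0:ℝ) ≤ μ ⟨1, hn1⟩ * (1 ^ 2 * 1 + 2 * 1 * (-ε) * ⟪z, w⟫_ℝ
          + (-ε) ^ 2 * ⟪w, w⟫_ℝ)
        - (1 ^ 2 * μ ⟨1, hn1⟩ + 2 * 1 * (-ε) * (μ ⟨0, hn0⟩ * ⟪z, w⟫_ℝ)
          + (-ε) ^ 2 * (μ ⟨0, hn0⟩ * ⟪w, w⟫_ℝ)) := hfin0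
    have hkey : (0:ℝ) ≤ ε * ((μ ⟨1, hn1⟩ - μ ⟨0, hn0⟩) * (ε * ⟪w, w⟫_ℝ - 2 * ⟪z, w⟫_ℝ)) := by
      have hE : μ ⟨1, hn1⟩ * (1 ^ 2 * 1 + 2 * 1 * (-ε) * ⟪z, w⟫_ℝ + (-ε) ^ 2 * ⟪w, w⟫_ℝ)
          - (1 ^ 2 * μ ⟨1, hn1⟩ + 2 * 1 * (-ε) * (μ ⟨0, hn0⟩ * ⟪z, w⟫_ℝ)
            + (-ε) ^ 2 * (μ ⟨0, hn0⟩ * ⟪w, w⟫_ℝ))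
          = ε * ((μ ⟨1, hn1⟩ - μ ⟨0, hn0⟩) * (ε * ⟪w, w⟫_ℝ - 2 * ⟪z, w⟫_ℝ)) := by ring
      linarith [hfin, hE.symm.le, hE.le]
    have hεw : ε * ⟪w, w⟫_ℝ ≤ ⟪z, w⟫_ℝ := by
      rw [← div_mul_cancel₀ (⟪z, w⟫_ℝ) (ne_of_gt hww)]
      exact mul_le_mul_of_nonneg_right hε2 (le_of_lt hww)
    have hneg : 0 < 2 * ⟪z, w⟫_ℝ - ε * ⟪w, w⟫_ℝ := by linarith
    have hprod := mul_pos (mul_pos hεpos (sub_pos.mpr hμ01)) hneg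
    have hE2 : ε * ((μ ⟨1, hn1⟩ - μ ⟨0, hn0⟩) * (ε * ⟪w, w⟫_ℝ - 2 * ⟪z, w⟫_ℝ))
        = -(ε * (μ ⟨1, hn1⟩ - μ ⟨0, hn0⟩) * (2 * ⟪z, w⟫_ℝ - ε * ⟪w, w⟫_ℝ)) := by ring
    linarith [hkey, hprod, hE2.le, hE2.symm.le]
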